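/- arXiv:2001.03448 — 2 statements merged into one kernel-verified Lean document; each statement's English description precedes it below -/
import Mathlib

section
/- (Chvátal–Thomassen Lemma) Let G be an undirected graph, let k ≥ 1, and let B ⊆ V(G) be such that (i) B is a k-step dominating set of G, and (ii) the graph G/B obtained by contracting B to a single vertex is 2-edge connected. Then there exists an oriented subgraph →H of G \ G[B] such that (1) V(→H) is a (k−1)-step dominating set of G, and (2) for every v ∈ V(→H), d_→H(B, v) ≤ 2k and d_→H(v, B) ≤ 2k. -/
/-- There is a directed walk of length at most `n` from `u` to `v` along the relation `D`. -/
def DiPathLE {V : Type*} (D : V → V → Prop) (u v : V) (n : ℕ) : Prop :=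
  ∃ m ≤ n, ∃ f : ℕ → V, f 0 = u ∧ f m = v ∧ ∀ i < m, D (f i) (f (i + 1))

/-- `O` is an orientation of `G`: every arc of `O` is an edge of `G`, and every edge of `G`
gets exactly one of the two possible directions. -/
def IsOrientation {V : Type*} (G : SimpleGraph V) (O : V → V → Prop) : Prop :=
  (∀ u v, O u v → G.Adj u v) ∧ ∀ u v, G.Adj u v → (O u v ↔ ¬ O v u)

/-- `G` is 2-edge connected: connected and without bridges. -/
def TwoEdgeConnected {V : Type*} (G : SimpleGraph V) : Prop :=
  G.Connected ∧ ∀ e, ¬ G.IsBridge e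

/-- `G` has diameter exactly `d`. -/
def HasDiam {V : Type*} (G : SimpleGraph V) (d : ℕ) : Prop :=
  G.Connected ∧ (∀ u v, G.dist u v ≤ d) ∧ ∃ u v, G.dist u v = d

/-- `B` is a `k`-step dominating set of `G`. -/
def KStepDom {V : Type*} (G : SimpleGraph V) (B : Set V) (k : ℕ) : Prop :=
  ∀ v, ∃ u ∈ B, ∃ w : G.Walk v u, w.length ≤ k

/-- `D` is an oriented subgraph of `G` with vertex set `S`: every arc of `D` is an
orientation of an edge of `G` with both endpoints in `S`, and no edge receives
both directions. -/
def IsOrientedSubgraph {V : Type*} (G : SimpleGraph V) (S : Set V) (D : V → V → Prop) : Prop :=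
  (∀ u v, D u v → G.Adj u v ∧ u ∈ S ∧ v ∈ S) ∧ ∀ u v, ¬ (D u v ∧ D v u)

/-- The setoid identifying all the vertices of `B`. -/
def contractSetoid {V : Type*} (B : Set V) : Setoid V where
  r x y := x = y ∨ (x ∈ B ∧ y ∈ B)
  iseqv := by
    refine ⟨fun _ => Or.inl rfl, ?_, ?_⟩
    · rintro x y (rfl | h)
      · exact Or.inl rfl
      · exact Or.inr ⟨h.2, h.1⟩
    · rintro x y z (rfl | h1) (rfl | h2)
      · exact Or.inl rfl
      · exact Or.inr h2
      · exact Or.inr h1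
      · exact Or.inr ⟨h1.1, h2.2⟩

/-- The graph `G/B` obtained from `G` by contracting the set `B` to a single vertex
(removing resulting loops). -/
def contractGraph {V : Type*} (G : SimpleGraph V) (B : Set V) :
    SimpleGraph (Quotient (contractSetoid B)) where
  Adj a b := a ≠ b ∧ ∃ x y, Quotient.mk (contractSetoid B) x = a ∧
    Quotient.mk (contractSetoid B) y = b ∧ G.Adj x y
  symm := by
    constructor
    rintro a b ⟨hne, x, y, hx, hy, hadj⟩
    exact ⟨hne.symm, y, x, hy, hx, hadj.symm⟩
  loopless := by
    constructor
    rintro a ⟨hne, -⟩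
    exact hne rfl

/-- `k` is the length of a shortest cycle of `G` containing the edge `pq`. -/
def ShortestCycleThroughEdge {V : Type*} (G : SimpleGraph V) (p q : V) (k : ℕ) : Prop :=
  (∃ (a : V) (c : G.Walk a a), c.IsCycle ∧ s(p, q) ∈ c.edges ∧ c.length = k) ∧
  ∀ (a : V) (c : G.Walk a a), c.IsCycle → s(p, q) ∈ c.edges → k ≤ c.length

/-- `G` has radius exactly `r`. -/
def HasRadius {V : Type*} (G : SimpleGraph V) (r : ℕ) : Prop :=
  G.Connected ∧ (∃ v, ∀ u, G.dist v u ≤ r) ∧ ∀ v, ∃ u, r ≤ G.dist v u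

/-!
Build the oriented subgraph ear by ear. Call a vertex *special* if it lies in `B` or on an arc,
and keep the invariant that every special vertex `v` satisfies `d(B, v) ≤ 2k` and `d(v, B) ≤ 2k`
and is *anchored*: one of these two directed distances is at most the distance from `v` to `B`.

If some vertex `u` is farther than `k - 1` from every special vertex, let `x b` be the last edge
of a walk of length `≤ k` from `u` to `B`; then `x` is not special. As `x b` is not a bridge of
`G/B`, there are *ears*: walks from `x` that avoid `x b` and stop at their first special vertex
`z`. Take one minimising `|ear| + 1 + anchor(z)` and orient it as `b → x → ⋯ → z`, after reversing
every arc if `z` is anchored from `B`. Rerouting the ear along a shortest walk from one of its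
inner vertices `w` to `B` and comparing costs shows that the cost is at most `2k + 1` and that the
new path anchors `w` through `b` or through `z`. Each step makes `x` special, so the process
stops, and then the special vertices form a `(k - 1)`-step dominating set.
-/

namespace DiPathLE

variable {V : Type*} {D D' : V → V → Prop} {u v w : V} {m n : ℕ}

lemma refl (D : V → V → Prop) (v : V) (n : ℕ) : DiPathLE D v v n :=
  ⟨0, n.zero_le, fun _ => v, rfl, rfl, by omega⟩

lemma mono_length (h : DiPathLE D u v m) (hmn : m ≤ n) : DiPathLE D u v n :=
  let ⟨a, ha, f, hf⟩ := h
  ⟨a, ha.trans hmn, f, hf⟩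

lemma mono (hD : D ≤ D') (h : DiPathLE D u v n) : DiPathLE D' u v n :=
  let ⟨a, ha, f, h0, h1, hf⟩ := h
  ⟨a, ha, f, h0, h1, fun i hi => hD _ _ (hf i hi)⟩

lemma trans (h₁ : DiPathLE D u v m) (h₂ : DiPathLE D v w n) : DiPathLE D u w (m + n) := by
  obtain ⟨a, ha, f, hf0, hfa, hf⟩ := h₁
  obtain ⟨b, hb, g, hg0, hgb, hg⟩ := h₂
  refine ⟨a + b, by omega, fun i => if i ≤ a then f i else g (i - a), by simp [hf0], ?_, ?_⟩
  · rcases b.eq_zero_or_pos with rfl | hb0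
    · simp [hfa, ← hg0, hgb]
    · simp [show ¬ a + b ≤ a by omega, hgb]
  · intro i hi
    by_cases hia : i + 1 ≤ a
    · simpa [hia, show i ≤ a by omega] using hf i hia
    by_cases hia' : i = a
    · subst hia'
      simpa [hfa, ← hg0] using hg 0 (by omega)
    · simpa [show ¬ i ≤ a by omega, hia, show i + 1 - a = i - a + 1 by omega]
        using hg (i - a) (by omega)

lemma reverse (h : DiPathLE D u v n) : DiPathLE (flip D) v u n := by
  obtain ⟨a, ha, f, hf0, hfa, hf⟩ := h
  refine ⟨a, ha, fun i => f (a - i), by simpa using hfa, by simpa using hf0, fun i hi => ?_⟩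
  have := hf (a - (i + 1)) (by omega)
  rwa [show a - (i + 1) + 1 = a - i by omega] at this

lemma reverse_iff : DiPathLE (flip D) v u n ↔ DiPathLE D u v n :=
  ⟨fun h => h.reverse, fun h => h.reverse⟩

lemma eq_or_exists_rel_left (h : DiPathLE D u v n) : u = v ∨ ∃ w, D u w := by
  obtain ⟨m, -, f, hf0, hfm, hf⟩ := h
  rcases m.eq_zero_or_pos with rfl | hm
  · exact Or.inl (hf0.symm.trans hfm)
  · exact Or.inr ⟨f 1, hf0 ▸ hf 0 hm⟩

lemma eq_or_exists_rel_right (h : DiPathLE D u v n) : u = v ∨ ∃ w, D w v :=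
  h.reverse.eq_or_exists_rel_left.imp Eq.symm id

end DiPathLE

namespace SimpleGraph

variable {V : Type*} {G : SimpleGraph V}

lemma Walk.exists_eq_append_of_first (Q : V → Prop) {u c : V} (W : G.Walk u c) (hc : Q c) :
    ∃ (d : V) (W₁ : G.Walk u d) (W₂ : G.Walk d c), W = W₁.append W₂ ∧ Q d ∧
      ∀ v ∈ W₁.support, v = d ∨ ¬ Q v := by
  induction W with
  | nil => exact ⟨_, nil, nil, rfl, hc, by simp⟩
  | @cons u v c h W ih =>
    by_cases hu : Q u
    · exact ⟨u, nil, cons h W, rfl, hu, by simp⟩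
    obtain ⟨d, W₁, W₂, rfl, hd, hW₁⟩ := ih hc
    refine ⟨d, cons h W₁, W₂, rfl, hd, ?_⟩
    simpa [hu] using hW₁

lemma Walk.IsTrail.getVert_succ_ne_of_getVert_eq_succ {u v : V} {p : G.Walk u v}
    (hp : p.IsTrail) {i j : ℕ} (hi : i < p.length) (hj : j < p.length)
    (h : p.getVert i = p.getVert (j + 1)) :
    p.getVert (i + 1) ≠ p.getVert j := by
  intro h'
  have hij : i = j := by
    refine (hp.edges_nodup.getElem_inj_iff (hi := by simpa) (hj := by simpa)).mp ?_
    rw [getElem_edges, getElem_edges, h, h', Sym2.eq_swap]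
  subst hij
  exact (p.adj_getVert_succ hi).ne h

section Contraction

variable {B : Set V}

lemma contract_mk_eq_mk_iff_of_notMem {u v : V} (hv : v ∉ B) :
    Quotient.mk (contractSetoid B) u = Quotient.mk _ v ↔ u = v :=
  ⟨fun h => (Quotient.exact h).resolve_right fun h' => hv h'.2, congrArg _⟩

lemma exists_walk_to_set_of_contractGraph_walk {x b : V} (hb : b ∈ B)
    {α : Quotient (contractSetoid B)} (q : (contractGraph G B).Walk α (Quotient.mk _ b))
    (hq : s(Quotient.mk _ x, Quotient.mk _ b) ∉ q.edges) (v : V) (hv : v ∉ B)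
    (hvα : Quotient.mk _ v = α) :
    ∃ c ∈ B, ∃ W : G.Walk v c, s(x, b) ∉ W.edges := by
  generalize hβ : Quotient.mk (contractSetoid B) b = β at q hq
  revert hq
  induction q generalizing v with
  | nil =>
    exact fun _ => absurd ((contract_mk_eq_mk_iff_of_notMem hv).mp (hβ.trans hvα.symm) ▸ hb) hv
  | cons h q ih =>
    intro hq
    rw [Walk.edges_cons, List.mem_cons, not_or] at hq
    obtain ⟨-, v', y, hv', rfl, hvy⟩ := h
    obtain rfl := (contract_mk_eq_mk_iff_of_notMem hv).mp (hv'.trans hvα.symm)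
    have hne : s(v', y) ≠ s(x, b) := by
      rintro h
      rcases Sym2.eq_iff.mp h with ⟨rfl, rfl⟩ | ⟨rfl, -⟩
      exacts [hq.1 (by subst hv' hβ; rfl), hv hb]
    by_cases hy : y ∈ B
    · exact ⟨y, hy, Walk.cons hvy Walk.nil, by simpa using hne.symm⟩
    · obtain ⟨c, hc, W, hW⟩ := ih y hy rfl hβ hq.2
      refine ⟨c, hc, Walk.cons hvy W, ?_⟩
      rw [Walk.edges_cons, List.mem_cons, not_or]
      exact ⟨hne.symm, hW⟩

lemma exists_walk_to_set_avoiding {x b : V} (hx : x ∉ B) (hb : b ∈ B)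
    (hbr : ¬ (contractGraph G B).IsBridge s(Quotient.mk _ x, Quotient.mk _ b)) :
    ∃ c ∈ B, ∃ W : G.Walk x c, s(x, b) ∉ W.edges := by
  rw [isBridge_iff_forall_walk_mem_edges] at hbr
  push Not at hbr
  obtain ⟨q, hq⟩ := hbr
  exact exists_walk_to_set_of_contractGraph_walk hb q hq x hx rfl

end Contraction

section DistToSet

variable {B : Set V} {k : ℕ} {v : V}

/-- `0` when no vertex of `B` is reachable from `v`. -/
noncomputable def distToSet (G : SimpleGraph V) (B : Set V) (v : V) : ℕ :=
  sInf {n | ∃ c ∈ B, ∃ w : G.Walk v c, w.length = n}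

lemma distToSet_le_length {c : V} (hc : c ∈ B) (w : G.Walk v c) : G.distToSet B v ≤ w.length :=
  Nat.sInf_le ⟨c, hc, w, rfl⟩

lemma _root_.KStepDom.exists_walk_length_eq_distToSet (hB : KStepDom G B k) (v : V) :
    ∃ c ∈ B, ∃ w : G.Walk v c, w.length = G.distToSet B v := by
  obtain ⟨c, hc, w, -⟩ := hB v
  exact Nat.sInf_mem (s := {n | ∃ c ∈ B, ∃ w : G.Walk v c, w.length = n}) ⟨_, c, hc, w, rfl⟩

lemma _root_.KStepDom.distToSet_le (hB : KStepDom G B k) (v : V) : G.distToSet B v ≤ k :=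
  let ⟨_, hc, w, hw⟩ := hB v
  (distToSet_le_length hc w).trans hw

lemma _root_.KStepDom.one_le_distToSet (hB : KStepDom G B k) (hv : v ∉ B) :
    1 ≤ G.distToSet B v := by
  obtain ⟨_, hc, w, hw⟩ := hB.exists_walk_length_eq_distToSet v
  rw [← hw, Nat.one_le_iff_ne_zero]
  exact fun h => hv (Walk.eq_of_length_eq_zero h ▸ hc)

end DistToSet

end SimpleGraph

namespace ChvatalThomassen

open SimpleGraph

variable {V : Type*} {G : SimpleGraph V} {B : Set V} {k n : ℕ} {D D' : V → V → Prop}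
  {a b c v w x z : V} {e : Sym2 V}

def IsEndpoint (D : V → V → Prop) (v : V) : Prop := ∃ w, D v w ∨ D w v

def IsSpecial (B : Set V) (D : V → V → Prop) (v : V) : Prop := v ∈ B ∨ IsEndpoint D v

/-- `d_D(B, v) ≤ n`. -/
def InDistLE (B : Set V) (D : V → V → Prop) (v : V) (n : ℕ) : Prop := ∃ c ∈ B, DiPathLE D c v n

/-- `d_D(v, B) ≤ n`. -/
def OutDistLE (B : Set V) (D : V → V → Prop) (v : V) (n : ℕ) : Prop := ∃ c ∈ B, DiPathLE D v c n

def IsAnchored (G : SimpleGraph V) (B : Set V) (D : V → V → Prop) (v : V) (n : ℕ) : Prop :=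
  n ≤ G.distToSet B v ∧ (OutDistLE B D v n ∨ InDistLE B D v n)

def IsWellPlaced (G : SimpleGraph V) (B : Set V) (k : ℕ) (D : V → V → Prop) (v : V) : Prop :=
  InDistLE B D v (2 * k) ∧ OutDistLE B D v (2 * k) ∧ ∃ n, IsAnchored G B D v n

structure IsAdmissible (G : SimpleGraph V) (B : Set V) (k : ℕ) (D : V → V → Prop) : Prop where
  adj : ∀ u v, D u v → G.Adj u v
  not_mem_and_mem : ∀ u v, D u v → ¬ (u ∈ B ∧ v ∈ B)
  asymm : ∀ u v, D u v → ¬ D v u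
  isWellPlaced : ∀ v, IsEndpoint D v → IsWellPlaced G B k D v

lemma IsSpecial.mono (hD : D ≤ D') : IsSpecial B D v → IsSpecial B D' v :=
  Or.imp_right fun ⟨w, h⟩ => ⟨w, h.imp (hD _ _) (hD _ _)⟩

lemma InDistLE.mono (hD : D ≤ D') : InDistLE B D v n → InDistLE B D' v n :=
  fun ⟨c, hc, h⟩ => ⟨c, hc, h.mono hD⟩

lemma OutDistLE.mono (hD : D ≤ D') : OutDistLE B D v n → OutDistLE B D' v n :=
  fun ⟨c, hc, h⟩ => ⟨c, hc, h.mono hD⟩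

lemma IsAnchored.mono (hD : D ≤ D') :
    IsAnchored G B D v n → IsAnchored G B D' v n :=
  fun ⟨hn, h⟩ => ⟨hn, h.imp (OutDistLE.mono hD) (InDistLE.mono hD)⟩

lemma IsWellPlaced.mono (hD : D ≤ D') :
    IsWellPlaced G B k D v → IsWellPlaced G B k D' v :=
  fun ⟨hin, hout, n, hn⟩ => ⟨hin.mono hD, hout.mono hD, n, hn.mono hD⟩

lemma isWellPlaced_of_mem (hv : v ∈ B) : IsWellPlaced G B k D v :=
  ⟨⟨v, hv, .refl D v _⟩, ⟨v, hv, .refl D v _⟩, 0, Nat.zero_le _, .inl ⟨v, hv, .refl D v _⟩⟩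

lemma IsAdmissible.isWellPlaced_of_isSpecial (hD : IsAdmissible G B k D)
    (hv : IsSpecial B D v) : IsWellPlaced G B k D v :=
  hv.elim isWellPlaced_of_mem (hD.isWellPlaced v)

lemma OutDistLE.isSpecial : OutDistLE B D v n → IsSpecial B D v
  | ⟨c, hc, h⟩ =>
    h.eq_or_exists_rel_left.imp (fun h : v = c => h ▸ hc) fun ⟨w, hw⟩ => ⟨w, .inl hw⟩

lemma InDistLE.isSpecial : InDistLE B D v n → IsSpecial B D v
  | ⟨c, hc, h⟩ =>
    h.eq_or_exists_rel_right.imp (fun h : c = v => h ▸ hc) fun ⟨w, hw⟩ => ⟨w, .inr hw⟩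

lemma IsAnchored.isSpecial (h : IsAnchored G B D v n) : IsSpecial B D v :=
  h.2.elim OutDistLE.isSpecial InDistLE.isSpecial

lemma isAdmissible_bot : IsAdmissible G B k fun _ _ => False :=
  ⟨fun _ _ => False.elim, fun _ _ => False.elim, fun _ _ => False.elim,
    fun _ ⟨_, h⟩ => h.elim False.elim False.elim⟩

lemma isEndpoint_flip : IsEndpoint (flip D) v ↔ IsEndpoint D v :=
  exists_congr fun _ => or_comm

lemma isSpecial_flip : IsSpecial B (flip D) v ↔ IsSpecial B D v :=
  or_congr_right isEndpoint_flip

lemma inDistLE_flip : InDistLE B (flip D) v n ↔ OutDistLE B D v n :=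
  exists_congr fun _ => and_congr_right' DiPathLE.reverse_iff

lemma outDistLE_flip : OutDistLE B (flip D) v n ↔ InDistLE B D v n :=
  inDistLE_flip.symm

lemma isAnchored_flip : IsAnchored G B (flip D) v n ↔ IsAnchored G B D v n :=
  and_congr_right' (by rw [inDistLE_flip, outDistLE_flip, or_comm])

lemma isWellPlaced_flip : IsWellPlaced G B k (flip D) v ↔ IsWellPlaced G B k D v := by
  simp only [IsWellPlaced, inDistLE_flip, outDistLE_flip, isAnchored_flip, ← and_assoc,
    and_comm (a := OutDistLE B D v _)]

lemma IsAdmissible.flip (hD : IsAdmissible G B k D) : IsAdmissible G B k (flip D) :=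
  ⟨fun u v h => (hD.adj v u h).symm, fun u v h huv => hD.not_mem_and_mem v u h huv.symm,
    fun u v h => hD.asymm v u h,
    fun v hv => isWellPlaced_flip.mpr (hD.isWellPlaced v (isEndpoint_flip.mp hv))⟩

def IsEarWalk (B : Set V) (D : V → V → Prop) (e : Sym2 V) {x z : V} (q : G.Walk x z) : Prop :=
  e ∉ q.edges ∧ ∀ v ∈ q.support, v = z ∨ ¬ IsSpecial B D v

/-- The `+ 1` is the edge `b x` that closes the ear `q` up at `b`. -/
def earCosts (G : SimpleGraph V) (B : Set V) (D : V → V → Prop) (x b : V) : Set ℕ :=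
  {c | ∃ (z : V) (q : G.Walk x z) (n : ℕ), IsEarWalk B D s(x, b) q ∧ IsAnchored G B D z n ∧
    c = q.length + 1 + n}

lemma isEarWalk_flip {q : G.Walk x z} : IsEarWalk B (flip D) e q ↔ IsEarWalk B D e q := by
  simp only [IsEarWalk, isSpecial_flip]

lemma earCosts_flip : earCosts G B (flip D) x b = earCosts G B D x b := by
  simp only [earCosts, isEarWalk_flip, isAnchored_flip]

lemma IsEarWalk.append {p₁ : G.Walk x w} {p₂ : G.Walk w z}
    (h₁ : ∀ v ∈ p₁.support, ¬ IsSpecial B D v) (he : e ∉ p₁.edges) (h₂ : IsEarWalk B D e p₂) :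
    IsEarWalk B D e (p₁.append p₂) := by
  refine ⟨by simp [Walk.edges_append, he, h₂.1], fun v hv => ?_⟩
  rcases (Walk.mem_support_append_iff p₁ p₂).mp hv with hv | hv
  exacts [.inr (h₁ v hv), h₂.2 v hv]

lemma IsEarWalk.drop {p : G.Walk x z} (h : IsEarWalk B D e p) (j : ℕ) :
    IsEarWalk B D e (p.drop j) := by
  refine ⟨fun he => h.1 ?_, fun v hv => h.2 v ?_⟩
  · rw [Walk.edges_drop] at he
    exact List.mem_of_mem_drop he
  · rw [Walk.drop_support_eq_support_drop_min] at hv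
    exact List.mem_of_mem_drop hv

lemma IsEarWalk.not_isSpecial_getVert {p : G.Walk x z} (hp : p.IsPath) (h : IsEarWalk B D e p)
    {i : ℕ} (hi : i < p.length) : ¬ IsSpecial B D (p.getVert i) :=
  (h.2 _ (p.getVert_mem_support i)).resolve_left fun h' => by
    rw [hp.getVert_eq_end_iff hi.le] at h'
    omega

lemma IsEarWalk.not_isSpecial_of_mem_support_take {p : G.Walk x z} (hp : p.IsPath)
    (h : IsEarWalk B D e p) {j : ℕ} (hj : j < p.length) :
    ∀ v ∈ (p.take j).support, ¬ IsSpecial B D v := by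
  intro v hv
  obtain ⟨m, rfl, -⟩ := Walk.mem_support_iff_exists_getVert.mp hv
  rw [Walk.take_getVert]
  exact h.not_isSpecial_getVert hp (lt_of_le_of_lt (min_le_left j m) hj)

lemma IsAdmissible.earCosts_nonempty (hD : IsAdmissible G B k D) (hx : ¬ IsSpecial B D x)
    (hb : b ∈ B) (hbr : ¬ (contractGraph G B).IsBridge s(Quotient.mk _ x, Quotient.mk _ b)) :
    (earCosts G B D x b).Nonempty := by
  obtain ⟨c, hc, W, hW⟩ := exists_walk_to_set_avoiding (fun h => hx (.inl h)) hb hbr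
  obtain ⟨d, W₁, W₂, rfl, hd, hW₁⟩ := W.exists_eq_append_of_first (IsSpecial B D) (.inl hc)
  obtain ⟨n, hn⟩ := (hD.isWellPlaced_of_isSpecial hd).2.2
  exact ⟨_, d, W₁, n, ⟨fun h => hW (by simp [Walk.edges_append, h]), hW₁⟩, hn, rfl⟩

lemma exists_isPath_minimal_ear (h : (earCosts G B D x b).Nonempty) :
    ∃ (z : V) (p : G.Walk x z) (n : ℕ), p.IsPath ∧ IsEarWalk B D s(x, b) p ∧
      IsAnchored G B D z n ∧ ∀ c ∈ earCosts G B D x b, p.length + 1 + n ≤ c := by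
  classical
  obtain ⟨z, q, n, hq, hn, hc⟩ := Nat.sInf_mem h
  refine ⟨z, q.bypass, n, q.bypass_isPath, ⟨fun h' => hq.1 (q.edges_bypass_subset_edges h'),
    fun v hv => hq.2 v (q.support_bypass_subset_support hv)⟩, hn, fun c hc' => ?_⟩
  have := q.length_bypass_le_length
  have := Nat.sInf_le hc'
  omega

/-- Reroute a minimal ear along a shortest walk from its inner vertex `w = p.getVert j` to `B`,
cut at the first vertex that is `x` or special. -/
lemma IsAdmissible.ear_cost_le_or_le_distToSet (hB : KStepDom G B k) (hD : IsAdmissible G B k D)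
    (hb : b ∈ B) {p : G.Walk x z} (hp : p.IsPath) (hear : IsEarWalk B D s(x, b) p)
    (hz : IsAnchored G B D z n) (hmin : ∀ c ∈ earCosts G B D x b, p.length + 1 + n ≤ c)
    {j : ℕ} (hj : j < p.length) :
    p.length + 1 + n ≤ j + 1 + G.distToSet B (p.getVert j) ∨
      j + 1 ≤ G.distToSet B (p.getVert j) := by
  have hx : ¬ IsSpecial B D x := by
    simpa using hear.not_isSpecial_getVert hp (j.zero_le.trans_lt hj)
  have hbσ : ∀ {u v} (q : G.Walk u v), b ∉ q.support → s(x, b) ∉ q.edges :=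
    fun q hq he => hq (q.snd_mem_support_of_mem_edges he)
  obtain ⟨c, hc, σ, hσ⟩ := hB.exists_walk_length_eq_distToSet (p.getVert j)
  obtain ⟨d, σ₁, σ₂, rfl, hd, hσ₁⟩ :=
    σ.exists_eq_append_of_first (fun v => IsSpecial B D v ∨ v = x) (.inl (.inl hc))
  simp only [not_or] at hσ₁
  rw [Walk.length_append] at hσ
  by_cases hdx : d = x
  · subst hdx
    right
    have hσ₁' : ∀ v ∈ σ₁.reverse.support, ¬ IsSpecial B D v := fun v hv => by
      rw [Walk.support_reverse, List.mem_reverse] at hv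
      rcases hσ₁ v hv with rfl | h
      exacts [hx, h.1]
    have hcost := hmin _ ⟨z, σ₁.reverse.append (p.drop j), n,
      IsEarWalk.append hσ₁' (hbσ _ fun h => hσ₁' b h (.inl hb)) (hear.drop j), hz, rfl⟩
    have := hB.one_le_distToSet (fun h => hx (.inl h)) |>.trans (distToSet_le_length hc σ₂)
    simp only [Walk.length_append, Walk.length_reverse, Walk.drop_length] at hcost
    omega
  · left
    obtain ⟨n', hn'⟩ := (hD.isWellPlaced_of_isSpecial (hd.resolve_right hdx)).2.2
    have htake := hear.not_isSpecial_of_mem_support_take hp hj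
    have hcost := hmin _ ⟨d, (p.take j).append σ₁, n', IsEarWalk.append htake
      (hbσ _ fun h => htake b h (.inl hb))
      ⟨fun he => (hσ₁ x (σ₁.fst_mem_support_of_mem_edges he)).elim (hdx ·.symm) (·.2 rfl),
        fun v hv => (hσ₁ v hv).imp_right And.left⟩, hn', rfl⟩
    have := hn'.1.trans (distToSet_le_length hc σ₂)
    simp only [Walk.length_append, Walk.take_length] at hcost
    omega

lemma IsAdmissible.ear_cost_le (hB : KStepDom G B k) (hD : IsAdmissible G B k D)
    (hb : b ∈ B) {p : G.Walk x z} (hp : p.IsPath) (hear : IsEarWalk B D s(x, b) p)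
    (hz : IsAnchored G B D z n) (hmin : ∀ c ∈ earCosts G B D x b, p.length + 1 + n ≤ c) :
    p.length + 1 + n ≤ 2 * k + 1 := by
  have := hz.1.trans (hB.distToSet_le z)
  by_cases hpk : p.length ≤ k
  · omega
  have := hB.distToSet_le (p.getVert k)
  have := hD.ear_cost_le_or_le_distToSet hB hb hp hear hz hmin (not_le.mp hpk)
  omega

def addArcs (D : V → V → Prop) (E : G.Walk a c) : V → V → Prop :=
  fun u v => D u v ∨ ∃ i < E.length, u = E.getVert i ∧ v = E.getVert (i + 1)

section AddArcs

variable (E : G.Walk a c)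

lemma le_addArcs : D ≤ addArcs D E := fun _ _ => .inl

lemma diPathLE_addArcs_start {i : ℕ} (hi : i ≤ E.length) :
    DiPathLE (addArcs D E) a (E.getVert i) i :=
  ⟨i, le_rfl, E.getVert, E.getVert_zero, rfl, fun r hr => .inr ⟨r, by omega, rfl, rfl⟩⟩

lemma diPathLE_addArcs_end (i : ℕ) : DiPathLE (addArcs D E) (E.getVert i) c (E.length - i) :=
  ⟨E.length - i, le_rfl, fun r => E.getVert (i + r), by simp,
    E.getVert_of_length_le (by omega), fun r hr => .inr ⟨i + r, by omega, rfl, rfl⟩⟩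

lemma isEndpoint_addArcs {v : V} (h : IsEndpoint (addArcs D E) v) :
    IsEndpoint D v ∨ ∃ i ≤ E.length, v = E.getVert i := by
  obtain ⟨w, (h | ⟨i, hi, rfl, -⟩) | (h | ⟨i, hi, -, rfl⟩)⟩ := h
  · exact .inl ⟨w, .inl h⟩
  · exact .inr ⟨i, hi.le, rfl⟩
  · exact .inl ⟨w, .inr h⟩
  · exact .inr ⟨i + 1, hi, rfl⟩

/-- Since every new arc has an endpoint that was not special, new arcs cannot join two vertices of
`B` nor reverse an old arc; the trail property forbids reversing a new one. -/
lemma IsAdmissible.addArcs_of_isTrail (hD : IsAdmissible G B k D) (hE : E.IsTrail)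
    (hfresh : ∀ i < E.length,
      ¬ IsSpecial B D (E.getVert i) ∨ ¬ IsSpecial B D (E.getVert (i + 1)))
    (hnew : ∀ i ≤ E.length, IsWellPlaced G B k (addArcs D E) (E.getVert i)) :
    IsAdmissible G B k (addArcs D E) := by
  have hold : ∀ {u v}, D u v → IsSpecial B D u ∧ IsSpecial B D v :=
    fun h => ⟨.inr ⟨_, .inl h⟩, .inr ⟨_, .inr h⟩⟩
  refine ⟨?_, ?_, ?_, fun v hv => ?_⟩
  · rintro u v (h | ⟨i, hi, rfl, rfl⟩)
    exacts [hD.adj u v h, E.adj_getVert_succ hi]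
  · rintro u v (h | ⟨i, hi, rfl, rfl⟩) ⟨hu, hv⟩
    exacts [hD.not_mem_and_mem u v h ⟨hu, hv⟩, (hfresh i hi).elim (· (.inl hu)) (· (.inl hv))]
  · rintro u v (h | ⟨i, hi, rfl, rfl⟩) (h' | ⟨j, hj, hv, hu⟩)
    · exact hD.asymm u v h h'
    · exact (hfresh j hj).elim (· (hv ▸ (hold h).2)) (· (hu ▸ (hold h).1))
    · exact (hfresh i hi).elim (· (hold h').2) (· (hold h').1)
    · exact hE.getVert_succ_ne_of_getVert_eq_succ hi hj hu hv
  · rcases isEndpoint_addArcs E hv with h | ⟨i, hi, rfl⟩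
    exacts [(hD.isWellPlaced v h).mono (le_addArcs E), hnew i hi]

end AddArcs

lemma IsAdmissible.exists_extension_of_ear (hB : KStepDom G B k) (hD : IsAdmissible G B k D)
    (hb : b ∈ B) (hxb : G.Adj x b) (hx : ¬ IsSpecial B D x) {p : G.Walk x z} (hp : p.IsPath)
    (hear : IsEarWalk B D s(x, b) p) (hz : IsAnchored G B D z n) (hout : OutDistLE B D z n)
    (hmin : ∀ c ∈ earCosts G B D x b, p.length + 1 + n ≤ c) :
    ∃ D', IsAdmissible G B k D' ∧ D ≤ D' ∧ IsSpecial B D' x := by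
  set E := Walk.cons hxb.symm p
  have hEv : ∀ j, E.getVert (j + 1) = p.getVert j := fun j => p.getVert_cons_succ hxb.symm
  have hlen : 0 < p.length := Nat.pos_of_ne_zero fun h =>
    hx (Walk.eq_of_length_eq_zero h ▸ hz.isSpecial)
  have hcost := hD.ear_cost_le hB hb hp hear hz hmin
  obtain ⟨c, hc, hzc⟩ := hout
  have hinner : ∀ j < p.length, IsWellPlaced G B k (addArcs D E) (p.getVert j) := by
    intro j hj
    have hin := hEv j ▸ diPathLE_addArcs_start (D := D) E (i := j + 1) (by simp [E]; omega)
    have hout := (hEv j ▸ diPathLE_addArcs_end (D := D) E (j + 1)).trans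
      (hzc.mono (le_addArcs E))
    simp only [E, Walk.length_cons, Nat.add_sub_add_right] at hout
    refine ⟨⟨b, hb, hin.mono_length (by omega)⟩, ⟨c, hc, hout.mono_length (by omega)⟩, ?_⟩
    rcases hD.ear_cost_le_or_le_distToSet hB hb hp hear hz hmin hj with h | h
    exacts [⟨_, by omega, .inl ⟨c, hc, hout⟩⟩, ⟨_, h, .inr ⟨b, hb, hin⟩⟩]
  refine ⟨addArcs D E, hD.addArcs_of_isTrail E ?_ (fun i hi => ?_) (fun i hi => ?_),
    le_addArcs E, .inr ⟨b, .inr (.inr ⟨0, by simp [E], by simp, by simp [hEv]⟩)⟩⟩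
  · rw [Walk.isTrail_cons, Sym2.eq_swap]
    exact ⟨hp.isTrail, hear.1⟩
  · rcases i with _ | j
    · exact .inr (by simpa [hEv] using hx)
    · rw [hEv]
      exact .inl (hear.not_isSpecial_getVert hp (by simpa [E] using hi))
  · rcases i with _ | j
    · exact isWellPlaced_of_mem hb
    rw [hEv]
    rcases (show j ≤ p.length by simpa [E] using hi).lt_or_eq with hj | rfl
    · exact hinner j hj
    · rw [Walk.getVert_length]
      exact (hD.isWellPlaced_of_isSpecial hz.isSpecial).mono (le_addArcs E)

lemma IsAdmissible.exists_extension (hB : KStepDom G B k)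
    (hbr : ∀ e, ¬ (contractGraph G B).IsBridge e) (hD : IsAdmissible G B k D) {u : V}
    (hu : ¬ ∃ s ∈ {v | IsSpecial B D v}, ∃ w : G.Walk u s, w.length ≤ k - 1) :
    ∃ D', IsAdmissible G B k D' ∧ D ≤ D' ∧
      ∃ x, ¬ IsSpecial B D x ∧ IsSpecial B D' x := by
  obtain ⟨c, hc, W, hW⟩ := hB u
  have hW0 : ¬ W.Nil := fun h => hu ⟨u, .inl (h.eq ▸ hc), .nil, by simp⟩
  have hx : ¬ IsSpecial B D W.penultimate := fun h =>
    hu ⟨_, h, W.dropLast, by rw [Walk.length_dropLast]; omega⟩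
  have hxc := W.adj_penultimate hW0
  obtain ⟨z, p, n, hp, hear, hz, hmin⟩ :=
    exists_isPath_minimal_ear (hD.earCosts_nonempty hx hc (hbr _))
  rcases hz.2 with hout | hin
  · obtain ⟨D', hD', hDD', hx'⟩ :=
      hD.exists_extension_of_ear hB hc hxc hx hp hear hz hout hmin
    exact ⟨D', hD', hDD', _, hx, hx'⟩
  · obtain ⟨D', hD', hDD', hx'⟩ := hD.flip.exists_extension_of_ear hB hc hxc
      (isSpecial_flip.not.mpr hx) hp (isEarWalk_flip.mpr hear) (isAnchored_flip.mpr hz)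
      (outDistLE_flip.mpr hin) (earCosts_flip (D := D) ▸ hmin)
    exact ⟨_, hD'.flip, fun a b h => hDD' b a h, _, hx, isSpecial_flip.mpr hx'⟩

lemma IsAdmissible.exists_kStepDom [Finite V] (hB : KStepDom G B k)
    (hbr : ∀ e, ¬ (contractGraph G B).IsBridge e) (hD : IsAdmissible G B k D) :
    ∃ D', IsAdmissible G B k D' ∧ KStepDom G {v | IsSpecial B D' v} (k - 1) := by
  induction h : {v | ¬ IsSpecial B D v}.ncard using Nat.strong_induction_on generalizing D with
  | _ m ih =>
  by_cases hcov : KStepDom G {v | IsSpecial B D v} (k - 1)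
  · exact ⟨D, hD, hcov⟩
  obtain ⟨u, hu⟩ := not_forall.mp hcov
  obtain ⟨D', hD', hDD', x, hx, hx'⟩ := hD.exists_extension hB hbr hu
  refine ih _ ?_ hD' rfl
  rw [← h]
  exact Set.ncard_lt_ncard ⟨fun v hv hv' => hv (hv'.mono hDD'), fun hsub => hsub hx hx'⟩

end ChvatalThomassen

theorem chvatal_thomassen_lemma_general {V : Type*} [Fintype V]
    (G : SimpleGraph V) (k : ℕ) (B : Set V)
    (hBdom : KStepDom G B k)
    (h2ec : TwoEdgeConnected (contractGraph G B)) :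
    ∃ (S : Set V) (D : V → V → Prop),
      IsOrientedSubgraph G S D ∧
      (∀ u v, D u v → ¬(u ∈ B ∧ v ∈ B)) ∧
      KStepDom G S (k - 1) ∧
      ∀ v ∈ S,
        (∃ b ∈ B, DiPathLE D b v (2 * k)) ∧ (∃ b ∈ B, DiPathLE D v b (2 * k)) := by
  obtain ⟨D, hD, hdom⟩ := ChvatalThomassen.isAdmissible_bot.exists_kStepDom hBdom h2ec.2
  refine ⟨{v | ChvatalThomassen.IsSpecial B D v}, D,
    ⟨fun u v h => ⟨hD.adj u v h, .inr ⟨v, .inl h⟩, .inr ⟨u, .inr h⟩⟩,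
      fun u v h => hD.asymm u v h.1 h.2⟩,
    hD.not_mem_and_mem, hdom, fun v hv => ?_⟩
  obtain ⟨hin, hout, -⟩ := hD.isWellPlaced_of_isSpecial hv
  exact ⟨hin, hout⟩

/-- **Chvátal–Thomassen Lemma.** -/
theorem chvatal_thomassen_lemma {V : Type*} [Fintype V]
    (G : SimpleGraph V) (k : ℕ) (hk : 1 ≤ k) (B : Set V)
    (hBdom : KStepDom G B k)
    (h2ec : TwoEdgeConnected (contractGraph G B)) :
    ∃ (S : Set V) (D : V → V → Prop),
      IsOrientedSubgraph G S D ∧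
      (∀ u v, D u v → ¬(u ∈ B ∧ v ∈ B)) ∧
      KStepDom G S (k - 1) ∧
      ∀ v ∈ S,
        (∃ b ∈ B, DiPathLE D b v (2 * k)) ∧ (∃ b ∈ B, DiPathLE D v b (2 * k)) :=
  chvatal_thomassen_lemma_general G k B hBdom h2ec
end

section
/- Let G be a 2-edge connected graph of diameter d, let pq be an edge of G, let k be the length of a shortest cycle of G containing the edge pq, and let h = ⌊k/2⌋. If k ≥ 4, then there exists a strongly connected oriented subgraph →H of G with p, q ∈ V(→H) whose (directed) diameter is at most 6d − 2h − 3. -/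
/-!
A shortest cycle through `pq`, oriented cyclically, already suffices. Since `pq` is not a bridge,
it closes a shortest `p`–`q` path `P` of `G - pq` into a cycle, so `k ≤ |P| + 1`. If `|P| > 2d`,
cut `P` at the vertex `x` at distance `d` from `p`. A shortest `q`–`x` path of `G` either avoids
`pq`, giving a `p`–`q` walk of length `≤ 2d` in `G - pq`, or starts with `qp`, giving a `p`–`x`
walk of length `< d` in `G - pq`; both contradict the minimality of `P`. Hence `k ≤ 2d + 1`, so
`d ≥ 2` and the cycle has directed diameter `k - 1 ≤ 2d ≤ 6d - 2⌊k/2⌋ - 3`.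
-/

theorem DiPathLE.mono_s5 {V : Type*} {D : V → V → Prop} {u v : V} {m n : ℕ}
    (h : DiPathLE D u v m) (hmn : m ≤ n) : DiPathLE D u v n := by
  obtain ⟨l, hl, f, hf⟩ := h
  exact ⟨l, hl.trans hmn, f, hf⟩

theorem Function.Periodic.diPathLE {V : Type*} {f : ℕ → V} {k : ℕ}
    (hf : Function.Periodic f k) (hk : 0 < k) (i j : ℕ) :
    DiPathLE (fun u v => ∃ n, f n = u ∧ f (n + 1) = v) (f i) (f j) (k - 1) := by
  have hm : (j + (k - 1) * i) % k < k := Nat.mod_lt _ hk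
  have hsum : i + (j + (k - 1) * i) = j + i * k := by
    obtain ⟨k, rfl⟩ := Nat.exists_eq_add_one_of_ne_zero hk.ne'
    simp only [Nat.add_sub_cancel]
    ring
  refine ⟨(j + (k - 1) * i) % k, by omega, fun t => f (i + t), rfl, ?_,
    fun t _ => ⟨i + t, rfl, rfl⟩⟩
  calc f (i + (j + (k - 1) * i) % k) = f ((i + (j + (k - 1) * i) % k) % k) :=
        (hf.map_mod_nat _).symm
    _ = f ((j + i * k) % k) := by rw [Nat.add_mod_mod, hsum]
    _ = f j := by rw [Nat.add_mul_mod_self_right, hf.map_mod_nat]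

namespace SimpleGraph

variable {V : Type*} {G : SimpleGraph V}

namespace Walk

def cycleVert {u : V} (c : G.Walk u u) (n : ℕ) : V :=
  c.getVert (n % c.length)

variable {u : V} {c : G.Walk u u}

theorem periodic_cycleVert (c : G.Walk u u) : Function.Periodic c.cycleVert c.length := by
  intro n
  simp only [cycleVert, Nat.add_mod_right]

theorem mem_range_cycleVert {v : V} (hv : v ∈ c.support) : v ∈ Set.range c.cycleVert := by
  obtain ⟨n, rfl, hn⟩ := mem_support_iff_exists_getVert.mp hv
  refine ⟨n, ?_⟩
  rcases hn.lt_or_eq with hn | rfl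
  · rw [cycleVert, Nat.mod_eq_of_lt hn]
  · rw [cycleVert, Nat.mod_self, getVert_zero, getVert_length]

theorem adj_cycleVert_succ (hc : 0 < c.length) (n : ℕ) :
    G.Adj (c.cycleVert n) (c.cycleVert (n + 1)) := by
  have hn : n % c.length < c.length := Nat.mod_lt n hc
  have hsucc : c.cycleVert (n + 1) = c.getVert (n % c.length + 1) := by
    rw [cycleVert, ← Nat.mod_add_mod]
    rcases Nat.lt_or_ge (n % c.length + 1) c.length with h | h
    · rw [Nat.mod_eq_of_lt h]
    · rw [show n % c.length + 1 = c.length by omega, Nat.mod_self, getVert_zero, getVert_length]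
  rw [hsucc]
  exact c.adj_getVert_succ hn

theorem IsCycle.cycleVert_eq_iff (hc : c.IsCycle) {i j : ℕ} :
    c.cycleVert i = c.cycleVert j ↔ i ≡ j [MOD c.length] := by
  have hpos : 0 < c.length := by have := hc.three_le_length; omega
  refine ⟨fun h => hc.getVert_injOn' ?_ ?_ h, fun h => by rw [cycleVert, cycleVert, h]⟩
  · exact Nat.le_sub_one_of_lt (Nat.mod_lt i hpos)
  · exact Nat.le_sub_one_of_lt (Nat.mod_lt j hpos)

theorem IsCycle.exists_isOrientedSubgraph (hc : c.IsCycle) :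
    ∃ (S : Set V) (D : V → V → Prop),
      IsOrientedSubgraph G S D ∧ {v | v ∈ c.support} ⊆ S ∧
      ∀ v ∈ S, ∀ w ∈ S, DiPathLE D v w (c.length - 1) := by
  have hlen := hc.three_le_length
  refine ⟨Set.range c.cycleVert, fun v w => ∃ n, c.cycleVert n = v ∧ c.cycleVert (n + 1) = w,
    ⟨?_, ?_⟩, fun v => mem_range_cycleVert, ?_⟩
  · rintro _ _ ⟨n, rfl, rfl⟩
    exact ⟨adj_cycleVert_succ (by omega) n, ⟨n, rfl⟩, ⟨n + 1, rfl⟩⟩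
  · rintro _ _ ⟨⟨i, rfl, hij⟩, ⟨j, hji, hj⟩⟩
    have h1 : i + 1 ≡ j [MOD c.length] := hc.cycleVert_eq_iff.mp (hij.trans hji.symm)
    have h2 : j + 1 ≡ i [MOD c.length] := hc.cycleVert_eq_iff.mp hj
    have h3 : i + 2 ≡ i + 0 [MOD c.length] := (h1.add_right 1).trans h2
    have h4 := Nat.ModEq.add_left_cancel' i h3
    rw [Nat.ModEq, Nat.mod_eq_of_lt (by omega), Nat.zero_mod] at h4
    omega
  · rintro _ ⟨i, rfl⟩ _ ⟨j, rfl⟩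
    exact c.periodic_cycleVert.diPathLE (by omega) i j

end Walk

/-- A path from `q` can contain the edge `pq` only as its first edge. -/
theorem Walk.IsPath.dist_deleteEdges_le_or_lt {p q x : V} {W : G.Walk q x} (hW : W.IsPath) :
    (G.deleteEdges {s(p, q)}).dist q x ≤ W.length ∨
      (G.deleteEdges {s(p, q)}).dist p x < W.length := by
  by_cases hmem : s(p, q) ∈ W.edges
  · right
    cases W with
    | nil => simp at hmem
    | @cons _ v _ hadj W' =>
      rw [Walk.cons_isPath_iff] at hW
      have hW' : s(p, q) ∉ W'.edges := fun h => hW.2 (W'.snd_mem_support_of_mem_edges h)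
      have hpv : p = v := by
        rw [Walk.edges_cons, List.mem_cons] at hmem
        rcases hmem with h | h
        · rcases Sym2.eq_iff.mp h with ⟨rfl, rfl⟩ | ⟨rfl, -⟩ <;> rfl
        · exact absurd h hW'
      subst hpv
      calc (G.deleteEdges {s(p, q)}).dist p x ≤ (W'.toDeleteEdge _ hW').length := dist_le _
        _ < (Walk.cons hadj W').length := by simp
  · left
    calc (G.deleteEdges {s(p, q)}).dist q x ≤ (W.toDeleteEdge _ hmem).length := dist_le _
      _ = W.length := by simp

theorem dist_deleteEdges_le_two_mul {d : ℕ} {p q : V} (hconn : G.Connected)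
    (hd : ∀ u v, G.dist u v ≤ d) (hreach : (G.deleteEdges {s(p, q)}).Reachable p q) :
    (G.deleteEdges {s(p, q)}).dist p q ≤ 2 * d := by
  obtain ⟨P, hP⟩ := hreach.exists_walk_length_eq_dist
  set x := P.getVert d
  have hpx : (G.deleteEdges {s(p, q)}).dist p x ≤ d := (dist_le (P.take d)).trans (by simp)
  have hxq : (G.deleteEdges {s(p, q)}).dist x q ≤ P.length - d :=
    (dist_le (P.drop d)).trans (by simp [Walk.drop_length])
  have htri : (G.deleteEdges {s(p, q)}).dist p q ≤
      (G.deleteEdges {s(p, q)}).dist p x + (G.deleteEdges {s(p, q)}).dist x q :=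
    (P.take d).reachable.dist_triangle_left q
  obtain ⟨W, hW⟩ := hconn.exists_walk_length_eq_dist q x
  have hWd : W.length ≤ d := hW ▸ hd q x
  rcases (W.isPath_of_length_eq_dist hW).dist_deleteEdges_le_or_lt (p := p) with h | h
  · rw [dist_comm] at h
    omega
  · omega

theorem exists_isCycle_length_eq_dist_deleteEdges_add_one {p q : V} (hpq : G.Adj p q)
    (hreach : (G.deleteEdges {s(p, q)}).Reachable p q) :
    ∃ (a : V) (c : G.Walk a a), c.IsCycle ∧ s(p, q) ∈ c.edges ∧
      c.length = (G.deleteEdges {s(p, q)}).dist p q + 1 := by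
  obtain ⟨P, hPpath, hP⟩ := hreach.exists_path_of_dist
  have hP' : s(q, p) ∉ (P.mapLe (G.deleteEdges_le _)).edges := by
    rw [Walk.edges_mapLe_eq_edges]
    intro h
    simpa [Sym2.eq_swap] using P.edges_subset_edgeSet h
  refine ⟨q, .cons hpq.symm (P.mapLe (G.deleteEdges_le _)), ?_, by simp [Sym2.eq_swap], ?_⟩
  · exact (Walk.cons_isCycle_iff _ _).mpr ⟨(Walk.isPath_mapLe _).mpr hPpath, hP'⟩
  · simp [hP]

theorem _root_.ShortestCycleThroughEdge.le_two_mul_add_one {d k : ℕ} {p q : V}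
    (hk : ShortestCycleThroughEdge G p q k) (hpq : G.Adj p q) (hpq' : ¬G.IsBridge s(p, q))
    (hconn : G.Connected) (hd : ∀ u v, G.dist u v ≤ d) : k ≤ 2 * d + 1 := by
  rw [isBridge_iff, not_not] at hpq'
  obtain ⟨a, c, hc, hpqc, hlen⟩ := exists_isCycle_length_eq_dist_deleteEdges_add_one hpq hpq'
  have := dist_deleteEdges_le_two_mul hconn hd hpq'
  have := hk.2 a c hc hpqc
  omega

end SimpleGraph

theorem orientedCore_diameter_general {V : Type*}
    (G : SimpleGraph V) (d k : ℕ) (p q : V)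
    (h2ec : TwoEdgeConnected G) (hdiam : HasDiam G d) (hpq : G.Adj p q)
    (hcyc : ShortestCycleThroughEdge G p q k) (hk4 : 4 ≤ k) :
    ∃ (S : Set V) (D : V → V → Prop),
      IsOrientedSubgraph G S D ∧ p ∈ S ∧ q ∈ S ∧
      ∀ u ∈ S, ∀ v ∈ S, DiPathLE D u v (6 * d - 2 * (k / 2) - 3) := by
  have hk : k ≤ 2 * d + 1 :=
    hcyc.le_two_mul_add_one hpq (h2ec.2 _) hdiam.1 hdiam.2.1
  obtain ⟨⟨a, c, hc, hpqc, rfl⟩, -⟩ := hcyc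
  obtain ⟨S, D, hD, hsupp, hdiamD⟩ := hc.exists_isOrientedSubgraph
  exact ⟨S, D, hD, hsupp (c.fst_mem_support_of_mem_edges hpqc),
    hsupp (c.snd_mem_support_of_mem_edges hpqc),
    fun u hu v hv => (hdiamD u hu v hv).mono_s5 (by omega)⟩

/-- If the shortest cycle through the edge `pq` has length `k ≥ 4`,
then `G` has a strongly connected oriented subgraph containing `p` and `q` of
(directed) diameter at most `6d - 2⌊k/2⌋ - 3`. -/
theorem orientedCore_diameter {V : Type*} [Fintype V]
    (G : SimpleGraph V) (d k : ℕ) (p q : V)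
    (h2ec : TwoEdgeConnected G) (hdiam : HasDiam G d) (hpq : G.Adj p q)
    (hcyc : ShortestCycleThroughEdge G p q k) (hk4 : 4 ≤ k) :
    ∃ (S : Set V) (D : V → V → Prop),
      IsOrientedSubgraph G S D ∧ p ∈ S ∧ q ∈ S ∧
      ∀ u ∈ S, ∀ v ∈ S, DiPathLE D u v (6 * d - 2 * (k / 2) - 3) :=
  orientedCore_diameter_general G d k p q h2ec hdiam hpq hcyc hk4
end
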